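/- Let (T(t))_{t≥0} be a strongly continuous semigroup on a complex Banach space X with ‖T(t)‖ ≤ Ne^{ωt}, and let u ∈ BC(ℝ,X). If g₁, g₂ ∈ BC(ℝ,X) both satisfy u(t) = T(t−s)u(s) + ∫_s^t T(t−ξ)gᵢ(ξ) dξ for all t ≥ s, then g₁ = g₂. Consequently the operator ℒ, defined on the set of u ∈ BC(ℝ,X) admitting such a g by ℒu := g, is a well-defined single-valued linear operator. -/
import Mathlib


open Set MeasureTheory intervalIntegral
open scoped BoundedContinuousFunction ZeroAtInfty

noncomputable section

/-- `T` is a strongly continuous semigroup of bounded linear operators with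
`‖T t‖ ≤ N * exp (ω * t)`. -/
def IsC0Semigroup {X : Type*} [NormedAddCommGroup X] [NormedSpace ℂ X]
    (T : ℝ → X →L[ℂ] X) (N ω : ℝ) : Prop :=
  T 0 = 1 ∧ (∀ a b : ℝ, 0 ≤ a → 0 ≤ b → T (a + b) = (T a).comp (T b)) ∧
    (∀ x : X, ContinuousOn (fun t : ℝ => T t x) (Set.Ici (0:ℝ))) ∧
    0 < N ∧ 0 < ω ∧ ∀ t : ℝ, 0 ≤ t → ‖T t‖ ≤ N * Real.exp (ω * t)

lemma aux_contOn {X : Type*} [NormedAddCommGroup X] [NormedSpace ℂ X]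
    {T : ℝ → X →L[ℂ] X} {N ω : ℝ} (hT : IsC0Semigroup T N ω)
    (g : ℝ → X) (hg : Continuous g) (t : ℝ) :
    ContinuousOn (fun ξ => T (t - ξ) (g ξ)) (Set.Iic t) := by
  intro ξ₀ hξ₀
  have hmap : MapsTo (fun ξ : ℝ => t - ξ) (Set.Iic t) (Set.Ici (0:ℝ)) := by
    intro ξ hξ
    simp only [mem_Ici]
    exact sub_nonneg.mpr (mem_Iic.mp hξ)
  have hB : ContinuousWithinAt (fun ξ : ℝ => T (t - ξ) (g ξ₀)) (Set.Iic t) ξ₀ :=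
    (hT.2.2.1 (g ξ₀) (t - ξ₀) (hmap hξ₀)).comp
      ((continuous_const.sub continuous_id).continuousWithinAt) hmap
  have hA : Filter.Tendsto (fun ξ : ℝ => T (t - ξ) (g ξ - g ξ₀)) (nhdsWithin ξ₀ (Set.Iic t))
      (nhds 0) := by
    have hbound : ∀ᶠ ξ in nhdsWithin ξ₀ (Set.Iic t),
        ‖T (t - ξ) (g ξ - g ξ₀)‖ ≤ N * Real.exp (ω * (t - ξ)) * ‖g ξ - g ξ₀‖ := by
      filter_upwards [self_mem_nhdsWithin] with ξ hξ
      calc ‖T (t - ξ) (g ξ - g ξ₀)‖ ≤ ‖T (t - ξ)‖ * ‖g ξ - g ξ₀‖ :=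
            (T (t - ξ)).le_opNorm _
        _ ≤ N * Real.exp (ω * (t - ξ)) * ‖g ξ - g ξ₀‖ := by
            apply mul_le_mul_of_nonneg_right (hT.2.2.2.2.2 _ (hmap hξ)) (norm_nonneg _)
    have htend : Filter.Tendsto (fun ξ : ℝ => N * Real.exp (ω * (t - ξ)) * ‖g ξ - g ξ₀‖)
        (nhdsWithin ξ₀ (Set.Iic t)) (nhds 0) := by
      have : Continuous fun ξ : ℝ => N * Real.exp (ω * (t - ξ)) * ‖g ξ - g ξ₀‖ := by
        continuity
      have h2 := (this.tendsto ξ₀).mono_left (nhdsWithin_le_nhds (s := Set.Iic t))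
      simpa using h2
    exact squeeze_zero_norm' hbound htend
  have : Filter.Tendsto (fun ξ : ℝ => T (t - ξ) (g ξ)) (nhdsWithin ξ₀ (Set.Iic t))
      (nhds (0 + T (t - ξ₀) (g ξ₀))) := by
    have := hA.add hB
    convert this using 2 with ξ
    rw [map_sub]
    abel
  rw [zero_add] at this
  exact this

lemma aux_intI {X : Type*} [NormedAddCommGroup X] [NormedSpace ℂ X]
    {T : ℝ → X →L[ℂ] X} {N ω : ℝ} (hT : IsC0Semigroup T N ω)
    (g : ℝ → X) (hg : Continuous g) {s t : ℝ} (hst : s ≤ t) :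
    IntervalIntegrable (fun ξ => T (t - ξ) (g ξ)) volume s t :=
  ((aux_contOn hT g hg t).mono (by rw [uIcc_of_le hst]; exact Icc_subset_Iic_self)).intervalIntegrable

/-- Uniqueness of the forcing term: if `u ∈ BC(ℝ, X)` satisfies the integral equation
with forcing terms `g₁` and `g₂`, then `g₁ = g₂`; consequently the operator `ℒ u := g` is
a well-defined single-valued linear operator. -/
theorem forcing_term_unique_and_linear {X : Type*} [NormedAddCommGroup X] [NormedSpace ℂ X] [CompleteSpace X]
    (T : ℝ → X →L[ℂ] X) (N ω : ℝ) (hT : IsC0Semigroup T N ω) :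
    (∀ u g₁ g₂ : ℝ →ᵇ X,
      (∀ s t : ℝ, s ≤ t → u t = T (t - s) (u s) + ∫ ξ in s..t, T (t - ξ) (g₁ ξ)) →
      (∀ s t : ℝ, s ≤ t → u t = T (t - s) (u s) + ∫ ξ in s..t, T (t - ξ) (g₂ ξ)) →
      g₁ = g₂) ∧
    (∀ u₁ u₂ g₁ g₂ : ℝ →ᵇ X,
      (∀ s t : ℝ, s ≤ t → u₁ t = T (t - s) (u₁ s) + ∫ ξ in s..t, T (t - ξ) (g₁ ξ)) →
      (∀ s t : ℝ, s ≤ t → u₂ t = T (t - s) (u₂ s) + ∫ ξ in s..t, T (t - ξ) (g₂ ξ)) →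
      ∀ s t : ℝ, s ≤ t →
        (u₁ + u₂) t = T (t - s) ((u₁ + u₂) s) + ∫ ξ in s..t, T (t - ξ) ((g₁ + g₂) ξ)) ∧
    (∀ (c : ℂ) (u g : ℝ →ᵇ X),
      (∀ s t : ℝ, s ≤ t → u t = T (t - s) (u s) + ∫ ξ in s..t, T (t - ξ) (g ξ)) →
      ∀ s t : ℝ, s ≤ t →
        (c • u) t = T (t - s) ((c • u) s) + ∫ ξ in s..t, T (t - ξ) ((c • g) ξ)) := by
  obtain ⟨hT0, hTadd, hTcont, hN, hω, hTbd⟩ := hT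
  have hT' : IsC0Semigroup T N ω := ⟨hT0, hTadd, hTcont, hN, hω, hTbd⟩
  refine ⟨?_, ?_, ?_⟩
  · -- uniqueness
    intro u g₁ g₂ h1 h2
    set h : ℝ → X := fun ξ => g₁ ξ - g₂ ξ with hh
    have hhcont : Continuous h := g₁.continuous.sub g₂.continuous
    have hint : ∀ s t : ℝ, s ≤ t → (∫ ξ in s..t, T (t - ξ) (h ξ)) = 0 := by
      intro s t hst
      have e1 := h1 s t hst
      have e2 := h2 s t hst
      have : (∫ ξ in s..t, T (t - ξ) (g₁ ξ)) = ∫ ξ in s..t, T (t - ξ) (g₂ ξ) := by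
        have := e1.symm.trans e2
        exact (add_right_inj _).mp this
      rw [show (fun ξ => T (t - ξ) (h ξ)) = fun ξ => T (t - ξ) (g₁ ξ) - T (t - ξ) (g₂ ξ) from
        funext fun ξ => by simp [hh, map_sub],
        intervalIntegral.integral_sub (aux_intI hT' g₁ g₁.continuous hst)
          (aux_intI hT' g₂ g₂.continuous hst), this, sub_self]
    have key : ∀ s : ℝ, h s = 0 := by
      intro s
      rw [← norm_le_zero_iff]
      by_contra hc
      push_neg at hc
      set ε := ‖h s‖ / 2 with hε
      have hεpos : 0 < ε := by positivity
      -- continuity of a ↦ T a (h s) at 0 within Ici 0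
      have c1 := hTcont (h s) 0 (mem_Ici.mpr le_rfl)
      rw [Metric.continuousWithinAt_iff] at c1
      obtain ⟨δ₁, hδ₁pos, hδ₁⟩ := c1 (ε / 2) (by positivity)
      -- continuity of h at s
      have c2 : ContinuousAt h s := hhcont.continuousAt
      rw [Metric.continuousAt_iff] at c2
      obtain ⟨δ₂, hδ₂pos, hδ₂⟩ := c2 (ε / (2 * N * Real.exp ω)) (by positivity)
      set δ := min (min δ₁ δ₂) 1 / 2 with hδ
      have hm1 : min (min δ₁ δ₂) 1 ≤ δ₁ := le_trans (min_le_left _ _) (min_le_left _ _)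
      have hm2 : min (min δ₁ δ₂) 1 ≤ δ₂ := le_trans (min_le_left _ _) (min_le_right _ _)
      have hm3 : min (min δ₁ δ₂) 1 ≤ 1 := min_le_right _ _
      have hmpos : 0 < min (min δ₁ δ₂) 1 := lt_min (lt_min hδ₁pos hδ₂pos) one_pos
      have hδpos : 0 < δ := by positivity
      have hδ1 : δ < δ₁ := by rw [hδ]; linarith
      have hδ2 : δ < δ₂ := by rw [hδ]; linarith
      have hδle1 : δ ≤ 1 := by rw [hδ]; linarith
      set t := s + δ with ht
      have hst : s ≤ t := by linarith
      -- pointwise bound on [s,t]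
      have hbd : ∀ ξ ∈ Set.uIoc s t, ‖h s - T (t - ξ) (h ξ)‖ ≤ ε := by
        rw [uIoc_of_le hst]
        intro ξ hξ
        obtain ⟨hξ1, hξ2⟩ := hξ
        have htξ0 : 0 ≤ t - ξ := by linarith
        have htξδ : t - ξ < δ := by simp only [ht]; linarith
        have term1 : ‖T (t - ξ) (h ξ) - T (t - ξ) (h s)‖ ≤ ε / 2 := by
          rw [← map_sub]
          calc ‖T (t - ξ) (h ξ - h s)‖ ≤ ‖T (t - ξ)‖ * ‖h ξ - h s‖ := (T (t - ξ)).le_opNorm _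
            _ ≤ (N * Real.exp (ω * (t - ξ))) * (ε / (2 * N * Real.exp ω)) := by
                apply mul_le_mul (hTbd _ htξ0) _ (norm_nonneg _) (by positivity)
                have : dist ξ s < δ₂ := by
                  rw [Real.dist_eq, abs_of_pos (by linarith : (0:ℝ) < ξ - s)]
                  simp only [ht] at hξ2; linarith
                have := hδ₂ this
                rw [dist_eq_norm] at this
                exact le_of_lt this
            _ ≤ (N * Real.exp ω) * (ε / (2 * N * Real.exp ω)) := by
                apply mul_le_mul_of_nonneg_right _ (by positivity)
                apply mul_le_mul_of_nonneg_left _ (le_of_lt hN)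
                apply Real.exp_le_exp.mpr
                calc ω * (t - ξ) ≤ ω * 1 := by
                      apply mul_le_mul_of_nonneg_left _ (le_of_lt hω)
                      linarith
                  _ = ω := mul_one ω
            _ = ε / 2 := by field_simp
        have term2 : ‖T (t - ξ) (h s) - h s‖ ≤ ε / 2 := by
          have hmem : t - ξ ∈ Set.Ici (0:ℝ) := htξ0
          have hd : dist (t - ξ) 0 < δ₁ := by
            rw [Real.dist_eq, sub_zero, abs_of_nonneg htξ0]
            linarith
          have := hδ₁ hmem hd
          rw [dist_eq_norm] at this
          have hT0' : T 0 (h s) = h s := by rw [hT0]; rfl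
          rw [hT0'] at this
          exact le_of_lt this
        calc ‖h s - T (t - ξ) (h ξ)‖
            = ‖(T (t - ξ) (h s) - T (t - ξ) (h ξ)) + (h s - T (t - ξ) (h s))‖ := by
              congr 1; abel
          _ ≤ ‖T (t - ξ) (h s) - T (t - ξ) (h ξ)‖ + ‖h s - T (t - ξ) (h s)‖ := norm_add_le _ _
          _ = ‖T (t - ξ) (h ξ) - T (t - ξ) (h s)‖ + ‖T (t - ξ) (h s) - h s‖ := by
              rw [norm_sub_rev (T (t - ξ) (h s)), norm_sub_rev (h s)]
          _ ≤ ε / 2 + ε / 2 := add_le_add term1 term2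
          _ = ε := by ring
      -- integral identity
      have hii : IntervalIntegrable (fun ξ => T (t - ξ) (h ξ)) volume s t :=
        aux_intI hT' h hhcont hst
      have hid : (∫ ξ in s..t, (h s - T (t - ξ) (h ξ))) = (t - s) • h s := by
        rw [intervalIntegral.integral_sub (intervalIntegrable_const) hii,
          hint s t hst, sub_zero, intervalIntegral.integral_const]
      have hnorm : ‖(t - s) • h s‖ ≤ ε * |t - s| := by
        rw [← hid]
        exact intervalIntegral.norm_integral_le_of_norm_le_const hbd
      rw [norm_smul, Real.norm_eq_abs] at hnorm
      have habs : |t - s| = δ := by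
        rw [ht]; simp [abs_of_pos hδpos]
      rw [habs] at hnorm
      have : ‖h s‖ ≤ ε := by
        have := hnorm
        rw [mul_comm ε δ] at this
        exact le_of_mul_le_mul_left this hδpos
      rw [hε] at this
      linarith
    ext s
    have := key s
    exact sub_eq_zero.mp this
  · -- additivity
    intro u₁ u₂ g₁ g₂ h1 h2 s t hst
    simp only [BoundedContinuousFunction.add_apply]
    rw [h1 s t hst, h2 s t hst, map_add]
    have h3 : (∫ ξ in s..t, T (t - ξ) (g₁ ξ + g₂ ξ)) =
        (∫ ξ in s..t, T (t - ξ) (g₁ ξ)) + ∫ ξ in s..t, T (t - ξ) (g₂ ξ) := by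
      rw [← intervalIntegral.integral_add (aux_intI hT' g₁ g₁.continuous hst)
        (aux_intI hT' g₂ g₂.continuous hst)]
      congr 1
      funext ξ
      simp [map_add]
    rw [h3]
    abel
  · -- homogeneity
    intro c u g h1 s t hst
    simp only [BoundedContinuousFunction.coe_smul, Pi.smul_apply]
    rw [h1 s t hst, smul_add]
    congr 1
    · exact ((T (t - s)).map_smul c (u s)).symm
    · rw [← intervalIntegral.integral_smul]
      congr 1
      funext ξ
      exact ((T (t - ξ)).map_smul c (g ξ)).symm
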